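/- arXiv:2407.10763 — 4 statements merged into one kernel-verified Lean document; each statement's English description precedes it below -/
import Mathlib

section
/- Let f : [0,∞) → (0,∞) be a continuous, strictly decreasing function (playing the role of mmse*), and let α > 0, t ≥ 0, Δ > Δ₀ > 0. Suppose E₀ ≥ 0 satisfies E₀ = f(α/(Δ+E₀) + t) = f(α/(Δ₀+E₀)), and suppose E₀ is the unique nonnegative solution of E = f(α/(Δ₀+E)). Then E₀ is the unique nonnegative solution of E = f(α/(Δ+E) + t). -/
/-- Uniqueness of the state-evolution fixed point with localization term
(abstraction of Proposition 3.3). -/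
theorem stmt_0 (f : ℝ → ℝ) (α t Δ Δ₀ E₀ : ℝ)
    (hf_cont : ContinuousOn f (Set.Ici 0))
    (hf_pos : ∀ x ∈ Set.Ici (0:ℝ), 0 < f x)
    (hf_anti : StrictAntiOn f (Set.Ici 0))
    (hα : 0 < α) (ht : 0 ≤ t) (hΔ₀ : 0 < Δ₀) (hΔ : Δ₀ < Δ)
    (hE₀ : 0 ≤ E₀)
    (hfix1 : E₀ = f (α / (Δ + E₀) + t))
    (hfix2 : E₀ = f (α / (Δ₀ + E₀)))
    (huniq : ∀ E, 0 ≤ E → E = f (α / (Δ₀ + E)) → E = E₀) :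
    ∀ E, 0 ≤ E → E = f (α / (Δ + E) + t) → E = E₀ := by
  intro E hE hfix
  -- basic positivity
  have hΔpos : 0 < Δ := hΔ₀.trans hΔ
  have hp₀ : 0 < Δ₀ + E₀ := by linarith
  have hq₀ : 0 < Δ + E₀ := by linarith
  have hp : 0 < Δ₀ + E := by linarith
  have hq : 0 < Δ + E := by linarith
  -- the two arguments at E₀ coincide
  have hmem1 : α / (Δ + E₀) + t ∈ Set.Ici (0:ℝ) := by
    have : 0 < α / (Δ + E₀) := div_pos hα hq₀
    simp [Set.mem_Ici]; linarith
  have hmem2 : α / (Δ₀ + E₀) ∈ Set.Ici (0:ℝ) := by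
    have : 0 < α / (Δ₀ + E₀) := div_pos hα hp₀
    simp [Set.mem_Ici]; linarith
  have harg : α / (Δ + E₀) + t = α / (Δ₀ + E₀) :=
    hf_anti.injOn hmem1 hmem2 (hfix1 ▸ hfix2)
  -- the auxiliary function for the t = 0 equation
  set g : ℝ → ℝ := fun x => f (α / (Δ₀ + x)) - x with hg
  have hgcont : ContinuousOn g (Set.Ici 0) := by
    apply ContinuousOn.sub _ continuousOn_id
    apply hf_cont.comp
    · exact ContinuousOn.div continuousOn_const
        (continuousOn_const.add continuousOn_id)
        (fun x hx => by simp only [Set.mem_Ici] at hx; positivity)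
    · intro x hx
      simp only [Set.mem_Ici] at hx ⊢
      positivity
  -- key monotone comparison of the arguments
  have key : ∀ x : ℝ, E₀ < x →
      α / (Δ₀ + x) < α / (Δ + x) + t := by
    intro x hx
    have hpx : 0 < Δ₀ + x := by linarith
    have hqx : 0 < Δ + x := by linarith
    have h1 : α / (Δ₀ + x) - α / (Δ + x) < α / (Δ₀ + E₀) - α / (Δ + E₀) := by
      rw [div_sub_div _ _ hpx.ne' hqx.ne', div_sub_div _ _ hp₀.ne' hq₀.ne',
        div_lt_div_iff₀ (by positivity) (by positivity)]
      have hΔΔ : 0 < Δ - Δ₀ := by linarith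
      nlinarith [mul_pos hα hΔΔ, mul_pos hp₀ hq₀, mul_pos hpx hqx,
        (show (Δ₀ + E₀) * (Δ + E₀) < (Δ₀ + x) * (Δ + x) by nlinarith)]
    linarith
  have key' : ∀ x : ℝ, 0 ≤ x → x < E₀ →
      α / (Δ + x) + t < α / (Δ₀ + x) := by
    intro x hx0 hx
    have hpx : 0 < Δ₀ + x := by linarith
    have hqx : 0 < Δ + x := by linarith
    have h1 : α / (Δ₀ + E₀) - α / (Δ + E₀) < α / (Δ₀ + x) - α / (Δ + x) := by
      rw [div_sub_div _ _ hp₀.ne' hq₀.ne', div_sub_div _ _ hpx.ne' hqx.ne',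
        div_lt_div_iff₀ (by positivity) (by positivity)]
      have hΔΔ : 0 < Δ - Δ₀ := by linarith
      nlinarith [mul_pos hα hΔΔ, mul_pos hp₀ hq₀, mul_pos hpx hqx,
        (show (Δ₀ + x) * (Δ + x) < (Δ₀ + E₀) * (Δ + E₀) by nlinarith)]
    linarith
  rcases lt_trichotomy E E₀ with hlt | heq | hgt
  · -- E < E₀ : g E < 0, g 0 > 0, get a root below E₀, contradiction
    exfalso
    have hargE : α / (Δ + E) + t < α / (Δ₀ + E) := key' E hE hlt
    have hmemE1 : (α / (Δ + E) + t) ∈ Set.Ici (0:ℝ) := by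
      have : 0 < α / (Δ + E) := div_pos hα hq
      simp [Set.mem_Ici]; linarith
    have hmemE2 : (α / (Δ₀ + E)) ∈ Set.Ici (0:ℝ) := by
      have : 0 < α / (Δ₀ + E) := div_pos hα hp
      simp [Set.mem_Ici]; linarith
    have hgE : g E < 0 := by
      have h := hf_anti hmemE1 hmemE2 hargE
      have h2 : f (α / (Δ + E) + t) = E := hfix.symm
      simp only [hg]
      linarith
    have hg0 : 0 < g 0 := by
      simp only [hg]
      have : 0 < f (α / (Δ₀ + 0)) := hf_pos _ (by simp [Set.mem_Ici]; positivity)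
      linarith
    have hivt := intermediate_value_Icc' (le_refl 0 |>.trans hE)
      (hgcont.mono (Set.Icc_subset_Ici_self))
    have h0mem : (0:ℝ) ∈ Set.Icc (g E) (g 0) := ⟨hgE.le, hg0.le⟩
    obtain ⟨c, hc, hgc⟩ := hivt h0mem
    have hc0 : 0 ≤ c := hc.1
    have hcE : c ≤ E := hc.2
    have : c = E₀ := huniq c hc0 (by simp only [hg] at hgc; linarith)
    linarith
  · exact heq
  · -- E > E₀ : g E > 0, g M < 0 for large M, get a root above E₀, contradiction
    exfalso
    have hargE : α / (Δ₀ + E) < α / (Δ + E) + t := key E hgt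
    have hmemE1 : (α / (Δ + E) + t) ∈ Set.Ici (0:ℝ) := by
      have : 0 < α / (Δ + E) := div_pos hα hq
      simp [Set.mem_Ici]; linarith
    have hmemE2 : (α / (Δ₀ + E)) ∈ Set.Ici (0:ℝ) := by
      have : 0 < α / (Δ₀ + E) := div_pos hα hp
      simp [Set.mem_Ici]; linarith
    have hgE : 0 < g E := by
      have h := hf_anti hmemE2 hmemE1 hargE
      have h2 : f (α / (Δ + E) + t) = E := hfix.symm
      simp only [hg]
      linarith
    set M : ℝ := max E (f 0 + 1) with hM
    have hEM : E ≤ M := le_max_left _ _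
    have hMf : f 0 + 1 ≤ M := le_max_right _ _
    have hM0 : 0 ≤ M := hE.trans hEM
    have hgM : g M < 0 := by
      have hpM : 0 < Δ₀ + M := by linarith
      have hxpos : 0 < α / (Δ₀ + M) := div_pos hα hpM
      have hfle : f (α / (Δ₀ + M)) < f 0 :=
        hf_anti (by simp [Set.mem_Ici]) (le_of_lt hxpos) hxpos
      simp only [hg]
      linarith
    have hivt := intermediate_value_Icc' hEM
      (hgcont.mono (Set.Icc_subset_Ici_self.trans (Set.Ici_subset_Ici.mpr hE)))
    have h0mem : (0:ℝ) ∈ Set.Icc (g M) (g E) := ⟨hgM.le, hgE.le⟩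
    obtain ⟨c, hc, hgc⟩ := hivt h0mem
    have hc0 : 0 ≤ c := hE.trans hc.1
    have : c = E₀ := huniq c hc0 (by simp only [hg] at hgc; linarith)
    linarith [hc.1]
end

section
/- Let E : (0,∞) × [0,∞) → (0,∞) be two C¹ solutions E₁, E₂ of the PDE α (∂E/∂t)/(Δ+E)² = −∂E/∂Δ with ∂Eᵢ/∂t ≠ 0 everywhere, sharing the same initial data E₁(Δ,0) = E₂(Δ,0) for all Δ > 0. Suppose every point (Δ,t) in the domain lies on a characteristic curve Δ(s) = α/(α/(δ+E(δ,0)) − s) − E(δ,0) emanating from some δ = Δ(0) > 0 at s = 0. Then E₁ ≡ E₂ on the domain. -/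
/-!
The PDE ties the sign of `∂_Δ E` to that of `-∂ₜE`, and by Darboux's theorem both have constant
sign along the lines where they are defined. Characteristics reaching arbitrarily late times start
at points with `δ + E(δ, 0)` arbitrarily small, which forces `E(·, 0)` to increase; hence every
solution increases in `Δ` and decreases in `t`, and so is jointly continuous. A maximum principle
then compares two solutions: on a rectangle `[d, Δ] × [0, t]` a positive maximum of `E₁ - E₂` lies
neither on the bottom edge (equal initial data), nor on the left edge (where it is below
`E₁(d, 0)`, which is small), nor elsewhere, since there `∂ₜ(E₁ - E₂) ≥ 0` and
`∂_Δ(E₁ - E₂) ≥ 0` contradict the PDE together with `E₁ > E₂`.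
-/

open Set Filter Topology Function

lemma HasDerivAt.nonneg_of_isMaxOn_Icc {f : ℝ → ℝ} {f' a b : ℝ} (hf : HasDerivAt f f' b)
    (hab : a < b) (hmax : IsMaxOn f (Icc a b) b) : 0 ≤ f' := by
  have hslope : Tendsto (slope f b) (𝓝[<] b) (𝓝 f') :=
    (hasDerivAt_iff_tendsto_slope.1 hf).mono_left (nhdsWithin_mono b fun _ hx => ne_of_lt hx)
  refine ge_of_tendsto hslope ?_
  filter_upwards [Ioo_mem_nhdsLT hab] with x hx
  rw [slope_def_field]
  exact div_nonneg_of_nonpos (sub_nonpos.2 (hmax ⟨hx.1.le, hx.2.le⟩)) (sub_nonpos.2 hx.2.le)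

lemma monotoneOn_of_forall_hasDerivAt_nonneg {D : Set ℝ} (hD : Convex ℝ D) {f f' : ℝ → ℝ}
    (hf : ∀ x ∈ D, HasDerivAt f (f' x) x) (hf' : ∀ x ∈ D, 0 ≤ f' x) : MonotoneOn f D :=
  monotoneOn_of_hasDerivWithinAt_nonneg hD (fun x hx => (hf x hx).continuousAt.continuousWithinAt)
    (fun x hx => (hf x (interior_subset hx)).hasDerivWithinAt)
    fun x hx => hf' x (interior_subset hx)

lemma antitoneOn_of_forall_hasDerivAt_nonpos {D : Set ℝ} (hD : Convex ℝ D) {f f' : ℝ → ℝ}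
    (hf : ∀ x ∈ D, HasDerivAt f (f' x) x) (hf' : ∀ x ∈ D, f' x ≤ 0) : AntitoneOn f D :=
  antitoneOn_of_hasDerivWithinAt_nonpos hD (fun x hx => (hf x hx).continuousAt.continuousWithinAt)
    (fun x hx => (hf x (interior_subset hx)).hasDerivWithinAt)
    fun x hx => hf' x (interior_subset hx)

/-- Monotonicity in the first variable squeezes `f x y` between `f a y` and `f b y`, which are
close to `f x₀ y₀` for `y` close to `y₀`. -/
theorem ContinuousOn.uncurry_of_monotoneOn {β : Type*} [TopologicalSpace β] {f : ℝ → β → ℝ}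
    {s : Set ℝ} {t : Set β} (hs : IsOpen s) (hmono : ∀ y ∈ t, MonotoneOn (f · y) s)
    (hleft : ∀ y ∈ t, ∀ x ∈ s, ContinuousAt (f · y) x) (hright : ∀ x ∈ s, ContinuousOn (f x) t) :
    ContinuousOn (uncurry f) (s ×ˢ t) := by
  rintro ⟨x₀, y₀⟩ ⟨hx₀, hy₀⟩
  rw [ContinuousWithinAt, nhdsWithin_prod_eq, uncurry_apply_pair]
  have hnear : ∀ᶠ x in 𝓝 x₀, x ∈ s := hs.mem_nhds hx₀
  refine tendsto_order.2 ⟨fun c hc => ?_, fun c hc => ?_⟩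
  · obtain ⟨a, ⟨hca, ha⟩, hax⟩ : ∃ a, (c < f a y₀ ∧ a ∈ s) ∧ a < x₀ :=
      ((((hleft y₀ hy₀ x₀ hx₀).eventually (lt_mem_nhds hc)).and hnear).filter_mono
        nhdsWithin_le_nhds |>.and (self_mem_nhdsWithin (s := Iio x₀))).exists
    filter_upwards [(((lt_mem_nhds hax).and hnear).filter_mono nhdsWithin_le_nhds).prod_mk
      (((hright a ha y₀ hy₀).eventually (lt_mem_nhds hca)).and self_mem_nhdsWithin)]
      with ⟨x, y⟩ ⟨⟨hax, hx⟩, hcy, hy⟩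
    exact hcy.trans_le (hmono y hy ha hx hax.le)
  · obtain ⟨b, ⟨hcb, hb⟩, hxb⟩ : ∃ b, (f b y₀ < c ∧ b ∈ s) ∧ x₀ < b :=
      ((((hleft y₀ hy₀ x₀ hx₀).eventually (gt_mem_nhds hc)).and hnear).filter_mono
        nhdsWithin_le_nhds |>.and (self_mem_nhdsWithin (s := Ioi x₀))).exists
    filter_upwards [(((gt_mem_nhds hxb).and hnear).filter_mono nhdsWithin_le_nhds).prod_mk
      (((hright b hb y₀ hy₀).eventually (gt_mem_nhds hcb)).and self_mem_nhdsWithin)]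
      with ⟨x, y⟩ ⟨⟨hxb, hx⟩, hcy, hy⟩
    exact (hmono y hy hx hb hxb.le).trans_lt hcy

lemma exists_lt_of_forall_lt_div {α : ℝ} {g : ℝ → ℝ} (hα : 0 < α) (hg : ∀ d, 0 < d → 0 < g d)
    (h : ∀ T, 0 ≤ T → ∃ d, 0 < d ∧ T < α / g d) : ∀ μ, 0 < μ → ∃ d, 0 < d ∧ g d < μ := by
  intro μ hμ
  obtain ⟨d, hd, hlt⟩ := h (α / μ) (by positivity)
  exact ⟨d, hd, (div_lt_div_iff_of_pos_left hα hμ (hg d hd)).1 hlt⟩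

structure IsIMMSESolution (α : ℝ) (E Et ED : ℝ → ℝ → ℝ) : Prop where
  pos : ∀ Δ t, 0 < Δ → 0 ≤ t → 0 < E Δ t
  hasDerivAt_t : ∀ Δ t, 0 < Δ → 0 ≤ t → HasDerivAt (fun s => E Δ s) (Et Δ t) t
  hasDerivAt_Δ : ∀ Δ t, 0 < Δ → 0 ≤ t → HasDerivAt (fun d => E d t) (ED Δ t) Δ
  pde : ∀ Δ t, 0 < Δ → 0 ≤ t → α * Et Δ t / (Δ + E Δ t) ^ 2 = -ED Δ t
  Et_ne_zero : ∀ Δ t, 0 < Δ → 0 ≤ t → Et Δ t ≠ 0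

namespace IsIMMSESolution

variable {α : ℝ} {E Et ED E₂ Et₂ ED₂ : ℝ → ℝ → ℝ}

lemma ED_pos_iff (hα : 0 < α) (S : IsIMMSESolution α E Et ED) {Δ t : ℝ} (hΔ : 0 < Δ)
    (ht : 0 ≤ t) : 0 < ED Δ t ↔ Et Δ t < 0 := by
  have hsq : 0 < (Δ + E Δ t) ^ 2 := by have := S.pos Δ t hΔ ht; positivity
  rw [← neg_neg (ED Δ t), ← S.pde Δ t hΔ ht, neg_pos, div_lt_iff₀ hsq, zero_mul]
  exact ⟨fun h => neg_of_mul_neg_right h hα.le, mul_neg_of_pos_of_neg hα⟩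

lemma ED_ne_zero (hα : 0 < α) (S : IsIMMSESolution α E Et ED) {Δ t : ℝ} (hΔ : 0 < Δ)
    (ht : 0 ≤ t) : ED Δ t ≠ 0 := by
  intro hzero
  have hsum : Δ + E Δ t ≠ 0 := (by linarith [S.pos Δ t hΔ ht] : 0 < Δ + E Δ t).ne'
  exact S.Et_ne_zero Δ t hΔ ht (by simpa [hzero, hα.ne', hsum] using S.pde Δ t hΔ ht)

lemma ED_initial_pos (hα : 0 < α) (S : IsIMMSESolution α E Et ED)
    (hsmall : ∀ μ, 0 < μ → ∃ d, 0 < d ∧ d + E d 0 < μ) : ∀ Δ, 0 < Δ → 0 < ED Δ 0 := by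
  rcases hasDerivWithinAt_forall_lt_or_forall_gt_of_forall_ne (convex_Ioi 0)
    (fun Δ hΔ => (S.hasDerivAt_Δ Δ 0 hΔ le_rfl).hasDerivWithinAt)
    (fun Δ hΔ => S.ED_ne_zero hα hΔ le_rfl) with hneg | hpos
  · exfalso
    have hanti : AntitoneOn (fun d => E d 0) (Ioi 0) :=
      antitoneOn_of_forall_hasDerivAt_nonpos (convex_Ioi 0)
        (fun Δ hΔ => S.hasDerivAt_Δ Δ 0 hΔ le_rfl) fun Δ hΔ => (hneg Δ hΔ).le
    obtain ⟨d, hd, hsum⟩ := hsmall (min 1 (E 1 0)) (lt_min one_pos (S.pos 1 0 one_pos le_rfl))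
    have hEd := S.pos d 0 hd le_rfl
    have hd1 : d ≤ 1 := by linarith [min_le_left 1 (E 1 0)]
    linarith [hanti hd (mem_Ioi.2 one_pos) hd1, min_le_right 1 (E 1 0)]
  · exact hpos

lemma Et_neg_of_ED_initial_pos (hα : 0 < α) (S : IsIMMSESolution α E Et ED)
    (hED : ∀ Δ, 0 < Δ → 0 < ED Δ 0) :
    ∀ Δ t, 0 < Δ → 0 ≤ t → Et Δ t < 0 := by
  intro Δ t hΔ ht
  rcases hasDerivWithinAt_forall_lt_or_forall_gt_of_forall_ne (convex_Ici 0)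
    (fun s hs => (S.hasDerivAt_t Δ s hΔ hs).hasDerivWithinAt) (S.Et_ne_zero Δ · hΔ) with hneg | hpos
  · exact hneg t ht
  · exact absurd ((S.ED_pos_iff hα hΔ le_rfl).1 (hED Δ hΔ)) (hpos 0 self_mem_Ici).not_gt

lemma continuousOn (hα : 0 < α) (S : IsIMMSESolution α E Et ED)
    (hEt : ∀ Δ t, 0 < Δ → 0 ≤ t → Et Δ t < 0) : ContinuousOn (uncurry E) (Ioi 0 ×ˢ Ici 0) :=
  ContinuousOn.uncurry_of_monotoneOn isOpen_Ioi
    (fun t ht => monotoneOn_of_forall_hasDerivAt_nonneg (convex_Ioi 0)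
      (fun Δ hΔ => S.hasDerivAt_Δ Δ t hΔ ht)
      fun Δ hΔ => ((S.ED_pos_iff hα hΔ ht).2 (hEt Δ t hΔ ht)).le)
    (fun t ht Δ hΔ => (S.hasDerivAt_Δ Δ t hΔ ht).continuousAt)
    fun Δ hΔ t ht => (S.hasDerivAt_t Δ t hΔ ht).continuousAt.continuousWithinAt

/-- Such a maximum gives `∂ₜE₂ ≤ ∂ₜE₁ < 0` and `∂_Δ E₂ ≤ ∂_Δ E₁`, whereas with
`Δ + E₂ < Δ + E₁` the PDE gives `∂_Δ E₁ < ∂_Δ E₂`. -/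
lemma not_isMaxOn_sub (hα : 0 < α) (S₁ : IsIMMSESolution α E Et ED)
    (S₂ : IsIMMSESolution α E₂ Et₂ ED₂) {a s Δ t : ℝ} (hΔ : 0 < Δ) (ht : 0 ≤ t) (haΔ : a < Δ)
    (hst : s < t) (hlt : E₂ Δ t < E Δ t) (hEt : Et Δ t < 0)
    (hmaxΔ : IsMaxOn (fun x => E x t - E₂ x t) (Icc a Δ) Δ)
    (hmaxt : IsMaxOn (fun r => E Δ r - E₂ Δ r) (Icc s t) t) : False := by
  have hEt₂ : Et₂ Δ t ≤ Et Δ t := sub_nonneg.1 <|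
    ((S₁.hasDerivAt_t Δ t hΔ ht).sub (S₂.hasDerivAt_t Δ t hΔ ht)).nonneg_of_isMaxOn_Icc hst hmaxt
  have hED₂ : ED₂ Δ t ≤ ED Δ t := sub_nonneg.1 <|
    ((S₁.hasDerivAt_Δ Δ t hΔ ht).sub (S₂.hasDerivAt_Δ Δ t hΔ ht)).nonneg_of_isMaxOn_Icc haΔ hmaxΔ
  have hsum₂ : 0 < Δ + E₂ Δ t := by linarith [S₂.pos Δ t hΔ ht]
  have hαEt : 0 < α * -Et Δ t := mul_pos hα (neg_pos.2 hEt)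
  have key : α * -Et Δ t / (Δ + E Δ t) ^ 2 < α * -Et₂ Δ t / (Δ + E₂ Δ t) ^ 2 := calc
    α * -Et Δ t / (Δ + E Δ t) ^ 2 < α * -Et Δ t / (Δ + E₂ Δ t) ^ 2 :=
      div_lt_div_of_pos_left hαEt (pow_pos hsum₂ 2) (by gcongr)
    _ ≤ α * -Et₂ Δ t / (Δ + E₂ Δ t) ^ 2 := by gcongr
  simp only [mul_neg, neg_div] at key
  linarith [S₁.pde Δ t hΔ ht, S₂.pde Δ t hΔ ht]

lemma sub_le_initial (hα : 0 < α) (S₁ : IsIMMSESolution α E Et ED)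
    (S₂ : IsIMMSESolution α E₂ Et₂ ED₂) (hEt : ∀ Δ t, 0 < Δ → 0 ≤ t → Et Δ t < 0)
    (hEt₂ : ∀ Δ t, 0 < Δ → 0 ≤ t → Et₂ Δ t < 0) (hinit : ∀ Δ, 0 < Δ → E Δ 0 = E₂ Δ 0)
    {d Δ t : ℝ} (hd : 0 < d) (hdΔ : d ≤ Δ) (ht : 0 ≤ t) : E Δ t - E₂ Δ t ≤ E d 0 := by
  have hsub : Icc d Δ ×ˢ Icc 0 t ⊆ Ioi 0 ×ˢ Ici 0 :=
    prod_mono (fun x hx => hd.trans_le hx.1) fun s hs => hs.1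
  have hcont : ContinuousOn (fun p : ℝ × ℝ => E p.1 p.2 - E₂ p.1 p.2) (Icc d Δ ×ˢ Icc 0 t) :=
    ((S₁.continuousOn hα hEt).sub (S₂.continuousOn hα hEt₂)).mono hsub
  obtain ⟨⟨x, s⟩, ⟨hx : x ∈ Icc d Δ, hs : s ∈ Icc 0 t⟩, hmax⟩ :=
    (isCompact_Icc.prod isCompact_Icc).exists_isMaxOn ⟨(Δ, t), ⟨hdΔ, le_rfl⟩, ht, le_rfl⟩ hcont
  refine (isMaxOn_iff.1 hmax (Δ, t) ⟨⟨hdΔ, le_rfl⟩, ht, le_rfl⟩).trans (not_lt.1 fun hgt => ?_)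
  have hx0 : 0 < x := hd.trans_le hx.1
  have hEd := S₁.pos d 0 hd le_rfl
  have hs0 : 0 < s := by
    refine hs.1.lt_of_ne fun hs0 => ?_
    subst hs0
    rw [hinit x hx0, sub_self] at hgt
    linarith
  have hdx : d < x := by
    refine hx.1.lt_of_ne fun hdx => ?_
    subst hdx
    have hanti : AntitoneOn (fun r => E d r) (Ici 0) :=
      antitoneOn_of_forall_hasDerivAt_nonpos (convex_Ici 0)
        (fun r hr => S₁.hasDerivAt_t d r hd hr) fun r hr => (hEt d r hd hr).le
    linarith [hanti self_mem_Ici hs.1 hs.1, S₂.pos d s hd hs.1]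
  exact S₁.not_isMaxOn_sub hα S₂ hx0 hs.1 hdx hs0 (by linarith) (hEt x s hx0 hs.1)
    (fun y hy => isMaxOn_iff.1 hmax (y, s) ⟨⟨hy.1, hy.2.trans hx.2⟩, hs⟩)
    fun r hr => isMaxOn_iff.1 hmax (x, r) ⟨hx, hr.1, hr.2.trans hs.2⟩

theorem le_of_initial_eq (hα : 0 < α) (S₁ : IsIMMSESolution α E Et ED)
    (S₂ : IsIMMSESolution α E₂ Et₂ ED₂) (hinit : ∀ Δ, 0 < Δ → E Δ 0 = E₂ Δ 0)
    (hsmall : ∀ μ, 0 < μ → ∃ d, 0 < d ∧ d + E d 0 < μ) {Δ t : ℝ} (hΔ : 0 < Δ) (ht : 0 ≤ t) :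
    E Δ t ≤ E₂ Δ t := by
  have hED := S₁.ED_initial_pos hα hsmall
  have hED₂ : ∀ Δ, 0 < Δ → 0 < ED₂ Δ 0 := by
    intro Δ hΔ
    have hEq : (fun d => E₂ d 0) =ᶠ[𝓝 Δ] fun d => E d 0 :=
      eventually_of_mem (Ioi_mem_nhds hΔ) fun d hd => (hinit d hd).symm
    rw [(S₂.hasDerivAt_Δ Δ 0 hΔ le_rfl).unique
      (hEq.hasDerivAt_iff.2 (S₁.hasDerivAt_Δ Δ 0 hΔ le_rfl))]
    exact hED Δ hΔ
  refine le_of_forall_pos_le_add fun ε hε => ?_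
  obtain ⟨d, hd, hsum⟩ := hsmall (min ε Δ) (lt_min hε hΔ)
  have hEd := S₁.pos d 0 hd le_rfl
  have hdiff := S₁.sub_le_initial hα S₂ (S₁.Et_neg_of_ED_initial_pos hα hED)
    (S₂.Et_neg_of_ED_initial_pos hα hED₂) hinit (Δ := Δ) hd (by linarith [min_le_right ε Δ]) ht
  linarith [min_le_left ε Δ]

end IsIMMSESolution

/-- Uniqueness of the solution of the I-MMSE PDE (Lemma A.3): two C¹ solutions
with the same initial data, whose domain is covered by the characteristic
curves, coincide. -/
theorem stmt_5 (α : ℝ) (E₁ E₂ Et₁ ED₁ Et₂ ED₂ : ℝ → ℝ → ℝ)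
    (hα : 0 < α)
    (hpos₁ : ∀ Δ t, 0 < Δ → 0 ≤ t → 0 < E₁ Δ t)
    (hpos₂ : ∀ Δ t, 0 < Δ → 0 ≤ t → 0 < E₂ Δ t)
    (hEt₁ : ∀ Δ t, 0 < Δ → 0 ≤ t → HasDerivAt (fun s => E₁ Δ s) (Et₁ Δ t) t)
    (hED₁ : ∀ Δ t, 0 < Δ → 0 ≤ t → HasDerivAt (fun d => E₁ d t) (ED₁ Δ t) Δ)
    (hEt₂ : ∀ Δ t, 0 < Δ → 0 ≤ t → HasDerivAt (fun s => E₂ Δ s) (Et₂ Δ t) t)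
    (hED₂ : ∀ Δ t, 0 < Δ → 0 ≤ t → HasDerivAt (fun d => E₂ d t) (ED₂ Δ t) Δ)
    (hPDE₁ : ∀ Δ t, 0 < Δ → 0 ≤ t →
      α * Et₁ Δ t / (Δ + E₁ Δ t) ^ 2 = - ED₁ Δ t)
    (hPDE₂ : ∀ Δ t, 0 < Δ → 0 ≤ t →
      α * Et₂ Δ t / (Δ + E₂ Δ t) ^ 2 = - ED₂ Δ t)
    (hEt₁_ne : ∀ Δ t, 0 < Δ → 0 ≤ t → Et₁ Δ t ≠ 0)
    (hEt₂_ne : ∀ Δ t, 0 < Δ → 0 ≤ t → Et₂ Δ t ≠ 0)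
    (hinit : ∀ Δ : ℝ, 0 < Δ → E₁ Δ 0 = E₂ Δ 0)
    (hcover : ∀ Δ t, 0 < Δ → 0 ≤ t → ∃ d : ℝ, 0 < d ∧
      (∀ s ∈ Set.Icc 0 t,
        s < α / (d + E₁ d 0) ∧
        0 < α / (α / (d + E₁ d 0) - s) - E₁ d 0) ∧
      Δ = α / (α / (d + E₁ d 0) - t) - E₁ d 0) :
    ∀ Δ t, 0 < Δ → 0 ≤ t → E₁ Δ t = E₂ Δ t := by
  have S₁ : IsIMMSESolution α E₁ Et₁ ED₁ := ⟨hpos₁, hEt₁, hED₁, hPDE₁, hEt₁_ne⟩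
  have S₂ : IsIMMSESolution α E₂ Et₂ ED₂ := ⟨hpos₂, hEt₂, hED₂, hPDE₂, hEt₂_ne⟩
  have hsmall₁ : ∀ μ, 0 < μ → ∃ d, 0 < d ∧ d + E₁ d 0 < μ :=
    exists_lt_of_forall_lt_div hα (fun d hd => by linarith [hpos₁ d 0 hd le_rfl]) fun T hT =>
      let ⟨d, hd, hchar, _⟩ := hcover 1 T one_pos hT
      ⟨d, hd, (hchar T ⟨hT, le_rfl⟩).1⟩
  have hsmall₂ : ∀ μ, 0 < μ → ∃ d, 0 < d ∧ d + E₂ d 0 < μ := fun μ hμ =>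
    (hsmall₁ μ hμ).imp fun d ⟨hd, hlt⟩ => ⟨hd, hinit d hd ▸ hlt⟩
  intro Δ t hΔ ht
  exact le_antisymm (S₁.le_of_initial_eq hα S₂ hinit hsmall₁ hΔ ht)
    (S₂.le_of_initial_eq hα S₁ (fun Δ hΔ => (hinit Δ hΔ).symm) hsmall₂ hΔ ht)
end

section
/- Let p ≥ 1 and let ⟨·⟩ denote expectation with respect to a probability measure ν on [-1,1]^p, with θ¹, θ² independent samples from ν. Define R₁₂ = (1/p)·θ¹ᵀθ² and q = ⟨R₁₂⟩, and let λ = λ_max(⟨θθᵀ⟩ − ⟨θ⟩⟨θ⟩ᵀ) be the largest eigenvalue of the covariance matrix. Then (p/2)·⟨|R₁₂ − q|²⟩ ≤ λ ≤ p·√(⟨|R₁₂ − q|²⟩). -/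
/-!
Let `M = ⟨θθᵀ⟩`, `μ = ⟨θ⟩` and `C = M - μμᵀ`. Averaging `(θ¹ᵀθ²)²` over two independent samples
gives `∑ᵢⱼ Mᵢⱼ²`, so `p² ⟨|R₁₂ - q|²⟩ = ‖M‖_F² - |μ|⁴ = ‖C‖_F² + 2 μᵀCμ`. The covariance `C` is
positive semidefinite, hence `0 ≤ μᵀCμ ≤ λ|μ|²`, `λ ≤ ‖C‖_F`, and `C² ≤ λC` gives
`‖C‖_F² ≤ λ tr C`. Finally `tr C ≤ p - |μ|²` because the coordinates are bounded by `1`.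
-/

open MeasureTheory ProbabilityTheory Finset Matrix

lemma sq_sum_mul_eq_sum_sum {ι : Type*} [Fintype ι] (x y : ι → ℝ) :
    (∑ i, x i * y i) ^ 2 = ∑ i, ∑ j, x i * x j * (y i * y j) := by
  rw [sq, sum_mul_sum]
  exact sum_congr rfl fun i _ => sum_congr rfl fun j _ => by ring

namespace Matrix

variable {ι : Type*} [Fintype ι] {C : Matrix ι ι ℝ}

/-- For symmetric `C` this is its largest eigenvalue. -/
noncomputable def rayleighSup (C : Matrix ι ι ℝ) : ℝ :=
  sSup {x : ℝ | ∃ v : ι → ℝ, (∑ i, v i ^ 2) = 1 ∧ x = ∑ i, ∑ j, v i * C i j * v j}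

lemma dotProduct_mulVec_eq_sum_sum (C : Matrix ι ι ℝ) (v w : ι → ℝ) :
    v ⬝ᵥ C *ᵥ w = ∑ i, ∑ j, v i * C i j * w j := by
  simp only [dotProduct, mulVec, mul_sum, mul_assoc]

lemma sum_sq_eq_dotProduct_self (v : ι → ℝ) : ∑ i, v i ^ 2 = v ⬝ᵥ v := by
  simp only [dotProduct, sq]

lemma dotProduct_self_nonneg (v : ι → ℝ) : 0 ≤ v ⬝ᵥ v := by
  simpa using dotProduct_self_star_nonneg v

lemma mulVec_dotProduct_mulVec_le_frobenius_mul (C : Matrix ι ι ℝ) (v : ι → ℝ) :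
    (C *ᵥ v) ⬝ᵥ (C *ᵥ v) ≤ (∑ i, ∑ j, C i j ^ 2) * (v ⬝ᵥ v) := by
  rw [← sum_sq_eq_dotProduct_self, ← sum_sq_eq_dotProduct_self, sum_mul]
  exact sum_le_sum fun i _ => sum_mul_sq_le_sq_mul_sq _ _ _

lemma sq_dotProduct_mulVec_le_frobenius_mul (C : Matrix ι ι ℝ) (v : ι → ℝ) :
    (v ⬝ᵥ C *ᵥ v) ^ 2 ≤ (∑ i, ∑ j, C i j ^ 2) * (v ⬝ᵥ v) ^ 2 :=
  calc (v ⬝ᵥ C *ᵥ v) ^ 2 ≤ (v ⬝ᵥ v) * ((C *ᵥ v) ⬝ᵥ (C *ᵥ v)) := by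
        rw [← sum_sq_eq_dotProduct_self, ← sum_sq_eq_dotProduct_self]
        exact sum_mul_sq_le_sq_mul_sq univ v (C *ᵥ v)
    _ ≤ (v ⬝ᵥ v) * ((∑ i, ∑ j, C i j ^ 2) * (v ⬝ᵥ v)) :=
        mul_le_mul_of_nonneg_left (C.mulVec_dotProduct_mulVec_le_frobenius_mul v)
          (dotProduct_self_nonneg v)
    _ = (∑ i, ∑ j, C i j ^ 2) * (v ⬝ᵥ v) ^ 2 := by ring

lemma rayleigh_le_sqrt_frobenius {v : ι → ℝ} (hv : ∑ i, v i ^ 2 = 1) :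
    ∑ i, ∑ j, v i * C i j * v j ≤ √(∑ i, ∑ j, C i j ^ 2) := by
  rw [← dotProduct_mulVec_eq_sum_sum]
  refine (le_abs_self _).trans (Real.abs_le_sqrt ?_)
  simpa [← sum_sq_eq_dotProduct_self, hv] using C.sq_dotProduct_mulVec_le_frobenius_mul v

lemma rayleighSup_le_sqrt_frobenius (C : Matrix ι ι ℝ) :
    C.rayleighSup ≤ √(∑ i, ∑ j, C i j ^ 2) :=
  Real.sSup_le (by rintro _ ⟨v, hv, rfl⟩; exact rayleigh_le_sqrt_frobenius hv) (Real.sqrt_nonneg _)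

lemma dotProduct_mulVec_le_rayleighSup_mul (C : Matrix ι ι ℝ) (v : ι → ℝ) :
    v ⬝ᵥ C *ᵥ v ≤ C.rayleighSup * (v ⬝ᵥ v) := by
  obtain hv | hv := (dotProduct_self_nonneg v).eq_or_lt
  · simp [dotProduct_self_eq_zero.mp hv.symm]
  have hunit : ∑ i, ((√(v ⬝ᵥ v))⁻¹ • v) i ^ 2 = 1 := by
    rw [sum_sq_eq_dotProduct_self, smul_dotProduct, dotProduct_smul, smul_eq_mul, smul_eq_mul,
      ← mul_assoc, ← sq, inv_pow, Real.sq_sqrt hv.le, inv_mul_cancel₀ hv.ne']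
  have hbdd : BddAbove
      {x : ℝ | ∃ v : ι → ℝ, (∑ i, v i ^ 2) = 1 ∧ x = ∑ i, ∑ j, v i * C i j * v j} :=
    ⟨_, by rintro _ ⟨v, hv, rfl⟩; exact rayleigh_le_sqrt_frobenius hv⟩
  have hle := le_csSup hbdd ⟨_, hunit, rfl⟩
  rw [← dotProduct_mulVec_eq_sum_sum, mulVec_smul, smul_dotProduct, dotProduct_smul,
    smul_eq_mul, smul_eq_mul, ← mul_assoc, ← sq, inv_pow, Real.sq_sqrt hv.le] at hle
  exact ((inv_mul_le_iff₀ hv).mp hle).trans_eq (mul_comm _ _)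

lemma sum_sum_sq_add_mul_sub_sq (C : Matrix ι ι ℝ) (μ : ι → ℝ) :
    ∑ i, ∑ j, (C i j + μ i * μ j) ^ 2 - (μ ⬝ᵥ μ) ^ 2 =
      ∑ i, ∑ j, C i j ^ 2 + 2 * (μ ⬝ᵥ C *ᵥ μ) := by
  rw [dotProduct, sq_sum_mul_eq_sum_sum, dotProduct_mulVec_eq_sum_sum]
  simp only [mul_sum, ← sum_add_distrib, ← sum_sub_distrib]
  exact sum_congr rfl fun i _ => sum_congr rfl fun j _ => by ring

namespace PosSemidef

lemma rayleighSup_nonneg (hC : C.PosSemidef) : 0 ≤ C.rayleighSup :=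
  Real.sSup_nonneg <| by
    rintro _ ⟨v, -, rfl⟩
    simpa [dotProduct_mulVec_eq_sum_sum] using hC.dotProduct_mulVec_nonneg v

lemma sq_dotProduct_mulVec_le_mul (hC : C.PosSemidef) (x y : ι → ℝ) :
    (x ⬝ᵥ C *ᵥ y) ^ 2 ≤ (x ⬝ᵥ C *ᵥ x) * (y ⬝ᵥ C *ᵥ y) := by
  let _ := C.toSeminormedAddCommGroup hC
  let _ := C.toInnerProductSpace hC
  have := real_inner_mul_inner_self_le x y
  change (C *ᵥ y ⬝ᵥ star x) * (C *ᵥ y ⬝ᵥ star x) ≤ (C *ᵥ x ⬝ᵥ star x) * (C *ᵥ y ⬝ᵥ star y) at this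
  simp only [star_trivial, dotProduct_comm (C *ᵥ _)] at this
  rw [sq]; linarith

lemma mulVec_dotProduct_mulVec_le_rayleighSup_mul (hC : C.PosSemidef) (v : ι → ℝ) :
    (C *ᵥ v) ⬝ᵥ (C *ᵥ v) ≤ C.rayleighSup * (v ⬝ᵥ C *ᵥ v) := by
  set w := C *ᵥ v
  have hv : 0 ≤ v ⬝ᵥ w := by simpa using hC.dotProduct_mulVec_nonneg v
  obtain hw | hw := (dotProduct_self_nonneg w).eq_or_lt
  · rw [← hw]
    exact mul_nonneg hC.rayleighSup_nonneg hv
  refine le_of_mul_le_mul_left ?_ hw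
  calc (w ⬝ᵥ w) * (w ⬝ᵥ w) = (w ⬝ᵥ C *ᵥ v) ^ 2 := (sq _).symm
    _ ≤ (w ⬝ᵥ C *ᵥ w) * (v ⬝ᵥ w) := hC.sq_dotProduct_mulVec_le_mul w v
    _ ≤ C.rayleighSup * (w ⬝ᵥ w) * (v ⬝ᵥ w) :=
      mul_le_mul_of_nonneg_right (C.dotProduct_mulVec_le_rayleighSup_mul w) hv
    _ = (w ⬝ᵥ w) * (C.rayleighSup * (v ⬝ᵥ w)) := by ring

lemma frobenius_le_rayleighSup_mul_trace (hC : C.PosSemidef) :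
    ∑ i, ∑ j, C i j ^ 2 ≤ C.rayleighSup * C.trace := by
  classical
  rw [sum_comm, trace, mul_sum]
  refine sum_le_sum fun k _ => ?_
  simpa [mulVec_single_one, ← sum_sq_eq_dotProduct_self] using
    hC.mulVec_dotProduct_mulVec_le_rayleighSup_mul (Pi.single k 1)

end PosSemidef

end Matrix

namespace ProbabilityTheory

variable {ι : Type*} {ν : Measure (ι → ℝ)}

noncomputable def covMatrix (ν : Measure (ι → ℝ)) : Matrix ι ι ℝ :=
  Matrix.of fun i j => cov[fun θ => θ i, fun θ => θ j; ν]

lemma memLp_apply_of_abs_le [IsFiniteMeasure ν] {B : ℝ} (hB : ∀ᵐ θ ∂ν, ∀ i, |θ i| ≤ B) (i : ι)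
    (p : ENNReal) : MemLp (fun θ : ι → ℝ => θ i) p ν :=
  .of_bound (measurable_pi_apply i).aestronglyMeasurable B <| by
    filter_upwards [hB] with θ hθ using hθ i

variable [Fintype ι]

lemma covMatrix_apply [IsProbabilityMeasure ν] (hL2 : ∀ i, MemLp (fun θ : ι → ℝ => θ i) 2 ν)
    (i j : ι) :
    covMatrix ν i j = ∫ θ, θ i * θ j ∂ν - (∫ θ, θ ∂ν) i * (∫ θ, θ ∂ν) j := by
  have hint (k : ι) : Integrable (fun θ : ι → ℝ => θ k) ν := (hL2 k).integrable one_le_two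
  rw [eval_integral hint, eval_integral hint]
  exact covariance_eq_sub (hL2 i) (hL2 j)

lemma posSemidef_covMatrix [IsFiniteMeasure ν] (hL2 : ∀ i, MemLp (fun θ : ι → ℝ => θ i) 2 ν) :
    (covMatrix ν).PosSemidef := by
  refine .of_dotProduct_mulVec_nonneg ?_ fun v => ?_
  · ext i j
    exact covariance_comm _ _
  · have hvar := variance_fun_sum (μ := ν) fun i => (hL2 i).const_mul (v i)
    simp only [covariance_const_mul_left, covariance_const_mul_right] at hvar
    rw [star_trivial, dotProduct_mulVec_eq_sum_sum]
    simpa [covMatrix, hvar, mul_comm, mul_left_comm, mul_assoc] using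
      variance_nonneg (fun θ : ι → ℝ => ∑ i, v i * θ i) ν

lemma integral_sum_sum_mul_mul (hint : ∀ i j, Integrable (fun θ : ι → ℝ => θ i * θ j) ν)
    (c : ι → ι → ℝ) :
    ∫ θ, ∑ i, ∑ j, c i j * (θ i * θ j) ∂ν = ∑ i, ∑ j, c i j * ∫ θ, θ i * θ j ∂ν := by
  rw [integral_finsetSum _ fun i _ => integrable_finsetSum _ fun j _ => (hint i j).const_mul _]
  refine sum_congr rfl fun i _ => ?_
  rw [integral_finsetSum _ fun j _ => (hint i j).const_mul _]
  simp only [integral_const_mul]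

lemma integral_integral_sq_sum_mul (hint : ∀ i j, Integrable (fun θ : ι → ℝ => θ i * θ j) ν) :
    ∫ θ₁, ∫ θ₂, (∑ i, θ₁ i * θ₂ i) ^ 2 ∂ν ∂ν = ∑ i, ∑ j, (∫ θ, θ i * θ j ∂ν) ^ 2 := by
  simp_rw [sq_sum_mul_eq_sum_sum, integral_sum_sum_mul_mul hint, mul_comm _ (∫ θ, _ ∂ν),
    integral_sum_sum_mul_mul hint, sq]

lemma integral_integral_sq_sum_mul_sub_sq_mean [IsProbabilityMeasure ν]
    (hL2 : ∀ i, MemLp (fun θ : ι → ℝ => θ i) 2 ν) :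
    ∫ θ₁, ∫ θ₂, (∑ i, θ₁ i * θ₂ i) ^ 2 ∂ν ∂ν - ((∫ θ, θ ∂ν) ⬝ᵥ ∫ θ, θ ∂ν) ^ 2 =
      ∑ i, ∑ j, covMatrix ν i j ^ 2 + 2 * ((∫ θ, θ ∂ν) ⬝ᵥ covMatrix ν *ᵥ ∫ θ, θ ∂ν) := by
  rw [integral_integral_sq_sum_mul fun i j => (hL2 i).integrable_mul (hL2 j),
    ← sum_sum_sq_add_mul_sub_sq]
  simp only [covMatrix_apply hL2, sub_add_cancel]

lemma trace_covMatrix_le [IsProbabilityMeasure ν] {B : ℝ}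
    (hB : ∀ᵐ θ ∂ν, ∀ i, |θ i| ≤ B) :
    (covMatrix ν).trace ≤ Fintype.card ι * B ^ 2 - (∫ θ, θ ∂ν) ⬝ᵥ ∫ θ, θ ∂ν := by
  have hL2 := memLp_apply_of_abs_le hB (p := 2)
  have hsecond (i : ι) : ∫ θ, θ i * θ i ∂ν ≤ B ^ 2 :=
    calc ∫ θ, θ i * θ i ∂ν ≤ ∫ _, B ^ 2 ∂ν := by
          refine integral_mono_ae ((hL2 i).integrable_mul (hL2 i)) (integrable_const _) ?_
          filter_upwards [hB] with θ hθ
          nlinarith [hθ i, abs_nonneg (θ i), abs_mul_abs_self (θ i)]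
      _ = B ^ 2 := by simp
  calc (covMatrix ν).trace = ∑ i, (∫ θ, θ i * θ i ∂ν - (∫ θ, θ ∂ν) i * (∫ θ, θ ∂ν) i) := by
        simp only [trace, Matrix.diag, covMatrix_apply hL2]
    _ ≤ ∑ i, (B ^ 2 - (∫ θ, θ ∂ν) i * (∫ θ, θ ∂ν) i) := by gcongr with i; exact hsecond i
    _ = Fintype.card ι * B ^ 2 - (∫ θ, θ ∂ν) ⬝ᵥ ∫ θ, θ ∂ν := by
        simp [sum_sub_distrib, dotProduct]

end ProbabilityTheory

theorem stmt_7_general (p : ℕ) (ν : Measure (Fin p → ℝ))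
    [IsProbabilityMeasure ν]
    (hsupp : ∀ᵐ θ ∂ν, ∀ i, |θ i| ≤ 1)
    (μ : Fin p → ℝ) (hμ : ∀ i, μ i = ∫ θ, θ i ∂ν)
    (C : Matrix (Fin p) (Fin p) ℝ)
    (hC : ∀ i j, C i j = (∫ θ, θ i * θ j ∂ν) - μ i * μ j)
    (lam : ℝ)
    (hlam : lam = sSup {x : ℝ | ∃ v : Fin p → ℝ,
      (∑ i, v i ^ 2) = 1 ∧ x = ∑ i, ∑ j, v i * C i j * v j})
    (V : ℝ)
    (hV : V = (1 / (p : ℝ) ^ 2) *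
        (∫ θ₁, ∫ θ₂, (∑ i, θ₁ i * θ₂ i) ^ 2 ∂ν ∂ν)
      - (1 / (p : ℝ) ^ 2) * (∑ i, μ i * μ i) ^ 2) :
    (p : ℝ) / 2 * V ≤ lam ∧ lam ≤ (p : ℝ) * Real.sqrt V := by
  obtain rfl | hp := p.eq_zero_or_pos
  · simp [hV, hlam]
  have hp : (0 : ℝ) < p := Nat.cast_pos.mpr hp
  change lam = C.rayleighSup at hlam
  subst hlam
  have hL2 := memLp_apply_of_abs_le hsupp (p := 2)
  have hmean : ∫ θ, θ ∂ν = μ := funext fun i =>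
    (eval_integral (fun k => (hL2 k).integrable one_le_two) i).trans (hμ i).symm
  have hcov : covMatrix ν = C := by ext i j; rw [hC, covMatrix_apply hL2, hmean]
  have hPSD : C.PosSemidef := hcov ▸ posSemidef_covMatrix hL2
  have hVF : (p : ℝ) ^ 2 * V = ∑ i, ∑ j, C i j ^ 2 + 2 * (μ ⬝ᵥ C *ᵥ μ) := by
    rw [hV, ← mul_sub, ← mul_assoc, mul_one_div_cancel (by positivity), one_mul, ← hcov, ← hmean]
    exact integral_integral_sq_sum_mul_sub_sq_mean hL2
  have hQ : 0 ≤ μ ⬝ᵥ C *ᵥ μ := by simpa using hPSD.dotProduct_mulVec_nonneg μ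
  constructor
  · have htr : C.trace ≤ p - μ ⬝ᵥ μ := by simpa [hcov, hmean] using trace_covMatrix_le hsupp
    have hS : μ ⬝ᵥ μ ≤ p := by linarith [hPSD.trace_nonneg]
    have hlam := hPSD.rayleighSup_nonneg
    refine le_of_mul_le_mul_left ?_ hp
    calc (p : ℝ) * (p / 2 * V) = (∑ i, ∑ j, C i j ^ 2 + 2 * (μ ⬝ᵥ C *ᵥ μ)) / 2 := by
          rw [← hVF]; ring
      _ ≤ (C.rayleighSup * C.trace + 2 * (C.rayleighSup * (μ ⬝ᵥ μ))) / 2 := by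
          gcongr
          exacts [hPSD.frobenius_le_rayleighSup_mul_trace,
            C.dotProduct_mulVec_le_rayleighSup_mul μ]
      _ ≤ (C.rayleighSup * (p - μ ⬝ᵥ μ) + 2 * (C.rayleighSup * (μ ⬝ᵥ μ))) / 2 := by gcongr
      _ ≤ p * C.rayleighSup := by nlinarith
  · calc C.rayleighSup ≤ √(∑ i, ∑ j, C i j ^ 2) := C.rayleighSup_le_sqrt_frobenius
      _ ≤ √((p : ℝ) ^ 2 * V) := Real.sqrt_le_sqrt (by linarith)
      _ = p * √V := by rw [Real.sqrt_mul (by positivity), Real.sqrt_sq hp.le]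

/-- Overlap concentration vs. largest eigenvalue of the covariance matrix
(Proposition of Appendix B.1): `(p/2)⟨|R₁₂−q|²⟩ ≤ λ_max ≤ p√⟨|R₁₂−q|²⟩`. -/
theorem stmt_7 (p : ℕ) (hp : 1 ≤ p) (ν : Measure (Fin p → ℝ))
    [IsProbabilityMeasure ν]
    (hsupp : ∀ᵐ θ ∂ν, ∀ i, |θ i| ≤ 1)
    (μ : Fin p → ℝ) (hμ : ∀ i, μ i = ∫ θ, θ i ∂ν)
    (C : Matrix (Fin p) (Fin p) ℝ)
    (hC : ∀ i j, C i j = (∫ θ, θ i * θ j ∂ν) - μ i * μ j)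
    (lam : ℝ)
    (hlam : lam = sSup {x : ℝ | ∃ v : Fin p → ℝ,
      (∑ i, v i ^ 2) = 1 ∧ x = ∑ i, ∑ j, v i * C i j * v j})
    (V : ℝ)
    (hV : V = (1 / (p : ℝ) ^ 2) *
        (∫ θ₁, ∫ θ₂, (∑ i, θ₁ i * θ₂ i) ^ 2 ∂ν ∂ν)
      - (1 / (p : ℝ) ^ 2) * (∑ i, μ i * μ i) ^ 2) :
    (p : ℝ) / 2 * V ≤ lam ∧ lam ≤ (p : ℝ) * Real.sqrt V :=
  stmt_7_general p ν hsupp μ hμ C hC lam hlam V hV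
end

section
/- Let P₀ be a probability measure supported on [−L, L] ⊂ ℝ, and for z ∈ ℝ, s > 0, define η(z) = (∫ x exp(−s(z−x)²/2) dP₀(x)) / (∫ exp(−s(z−x)²/2) dP₀(x)), the posterior mean of x given the Gaussian observation z with precision s. Then η is differentiable and η'(z) = s·Var(x | z), where Var(x | z) is the variance of the tilted measure dP₀(x)·exp(−s(z−x)²/2) normalized; consequently 0 ≤ η'(z) ≤ s·L², so η is s·L²-Lipschitz. -/
/-!
With `w z x = exp (-s (z - x)² / 2)`, the posterior mean is `N / D` for `D = ∫ w`,
`N = ∫ x w`; let `M₂ = ∫ x² w`.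
Since `∂_z w = s (x - z) w`, differentiating under the integral (legitimate because the prior
has compact support) gives `D' = s (N - z D)` and `N' = s (M₂ - z N)`, hence
`(N / D)' = s (M₂ / D - (N / D)²)`: `s` times the variance of the prior exponentially tilted by
`-s (z - x)² / 2`. That tilted measure is a probability measure carried by `[-L, L]`, so its
variance lies in `[0, L²]`, and the Lipschitz bound follows from the mean value theorem.
-/

open MeasureTheory ProbabilityTheory Real

section CompactSupport

variable {α E : Type*} [MeasurableSpace α] [TopologicalSpace α] [T2Space α]
  [OpensMeasurableSpace α] [NormedAddCommGroup E] {μ : Measure α} [IsFiniteMeasure μ] {K : Set α}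

theorem Continuous.integrable_of_ae_mem_isCompact {f : α → E} (hf : Continuous f)
    (hK : IsCompact K) (hμK : ∀ᵐ x ∂μ, x ∈ K) : Integrable f μ := by
  rw [← Measure.restrict_eq_self_of_ae_mem hμK]
  exact hf.continuousOn.integrableOn_compact hK

variable [NormedSpace ℝ E] [SecondCountableTopologyEither α E]

theorem hasDerivAt_integral_of_ae_mem_isCompact {F F' : ℝ → α → E}
    (hK : IsCompact K) (hμK : ∀ᵐ x ∂μ, x ∈ K) (hF : Continuous F.uncurry)
    (hF' : Continuous F'.uncurry) (hderiv : ∀ z x, HasDerivAt (F · x) (F' z x) z) (z₀ : ℝ) :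
    HasDerivAt (fun z => ∫ x, F z x ∂μ) (∫ x, F' z₀ x ∂μ) z₀ := by
  have hcont : ∀ {G : ℝ → α → E}, Continuous G.uncurry → ∀ z, Continuous (G z) :=
    fun hG z => hG.comp (Continuous.prodMk_right z)
  obtain ⟨C, hC⟩ := ((isCompact_closedBall z₀ 1).prod hK).exists_bound_of_continuousOn
    hF'.continuousOn
  refine (hasDerivAt_integral_of_dominated_loc_of_deriv_le (bound := fun _ => C)
    (Metric.ball_mem_nhds z₀ one_pos) (.of_forall fun z => (hcont hF z).aestronglyMeasurable)
    ((hcont hF z₀).integrable_of_ae_mem_isCompact hK hμK)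
    (hcont hF' z₀).aestronglyMeasurable ?_ (integrable_const C)
    (.of_forall fun x z _ => hderiv z x)).2
  filter_upwards [hμK] with x hx z hz
  exact hC (z, x) ⟨Metric.ball_subset_closedBall hz, hx⟩

end CompactSupport

theorem integral_tilted_eq_div {α : Type*} [MeasurableSpace α] {μ : Measure α} (f g : α → ℝ) :
    ∫ x, g x ∂(μ.tilted f) = (∫ x, g x * exp (f x) ∂μ) / ∫ x, exp (f x) ∂μ := by
  simp_rw [integral_tilted, smul_eq_mul, ← integral_div]
  congr 1 with x
  rw [div_mul_eq_mul_div, mul_comm]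

theorem integral_sq_sub_sq_integral_mem_Icc {ν : Measure ℝ} [IsProbabilityMeasure ν] {L : ℝ}
    (hν : ∀ᵐ x ∂ν, x ∈ Set.Icc (-L) L) :
    ∫ x, x ^ 2 ∂ν - (∫ x, x ∂ν) ^ 2 ∈ Set.Icc 0 (L ^ 2) := by
  have hmem : MemLp id 2 ν := .of_bound aestronglyMeasurable_id L <| by
    filter_upwards [hν] with x hx using abs_le.2 hx
  have hvar : variance id ν = ∫ x, x ^ 2 ∂ν - (∫ x, x ∂ν) ^ 2 := variance_eq_sub hmem
  refine hvar ▸ ⟨variance_nonneg id ν, ?_⟩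
  exact (variance_le_sq_of_bounded hν aemeasurable_id).trans_eq (by ring)

section Gaussian

variable {μ : Measure ℝ} [IsFiniteMeasure μ] {K : Set ℝ} {s : ℝ}

theorem hasDerivAt_exp_neg_mul_sq_sub_div_two (s x z : ℝ) :
    HasDerivAt (fun z => exp (-s * (z - x) ^ 2 / 2))
      (s * (x - z) * exp (-s * (z - x) ^ 2 / 2)) z := by
  have hexponent : HasDerivAt (fun z => -s * (z - x) ^ 2 / 2) (s * (x - z)) z :=
    (((((hasDerivAt_id' z).sub_const x).pow 2).const_mul (-s)).div_const 2).congr_deriv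
      (by ring)
  exact hexponent.exp.congr_deriv (mul_comm _ _)

theorem hasDerivAt_integral_mul_exp_neg_mul_sq_sub_div_two {g : ℝ → ℝ} (hg : Continuous g)
    (hK : IsCompact K) (hμK : ∀ᵐ x ∂μ, x ∈ K) (z : ℝ) :
    HasDerivAt (fun z => ∫ x, g x * exp (-s * (z - x) ^ 2 / 2) ∂μ)
      (s * (∫ x, x * g x * exp (-s * (z - x) ^ 2 / 2) ∂μ -
        z * ∫ x, g x * exp (-s * (z - x) ^ 2 / 2) ∂μ)) z := by
  have hint : ∀ {h : ℝ → ℝ}, Continuous h → Integrable h μ :=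
    fun hh => hh.integrable_of_ae_mem_isCompact hK hμK
  refine (hasDerivAt_integral_of_ae_mem_isCompact hK hμK (by fun_prop) (by fun_prop)
    (fun z x => (hasDerivAt_exp_neg_mul_sq_sub_div_two s x z).const_mul (g x)) z).congr_deriv ?_
  rw [← integral_const_mul, ← integral_sub (hint (by fun_prop)) (hint (by fun_prop)),
    ← integral_const_mul]
  congr 1 with x
  ring

end Gaussian

theorem hasDerivAt_div_integral_exp_neg_mul_sq_sub_div_two {μ : Measure ℝ} [IsFiniteMeasure μ]
    [NeZero μ] {K : Set ℝ} (s : ℝ) (hK : IsCompact K) (hμK : ∀ᵐ x ∂μ, x ∈ K) (z : ℝ) :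
    HasDerivAt
      (fun z => (∫ x, x * exp (-s * (z - x) ^ 2 / 2) ∂μ) / ∫ x, exp (-s * (z - x) ^ 2 / 2) ∂μ)
      (s * ((∫ x, x ^ 2 * exp (-s * (z - x) ^ 2 / 2) ∂μ) / (∫ x, exp (-s * (z - x) ^ 2 / 2) ∂μ) -
        ((∫ x, x * exp (-s * (z - x) ^ 2 / 2) ∂μ) / ∫ x, exp (-s * (z - x) ^ 2 / 2) ∂μ) ^ 2)) z := by
  have hN := hasDerivAt_integral_mul_exp_neg_mul_sq_sub_div_two (g := fun x => x) (s := s)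
    continuous_id hK hμK z
  have hD := hasDerivAt_integral_mul_exp_neg_mul_sq_sub_div_two (g := fun _ => 1) (s := s)
    continuous_const hK hμK z
  simp only [← pow_two] at hN
  simp only [one_mul, mul_one] at hD
  have hDpos : 0 < ∫ x, exp (-s * (z - x) ^ 2 / 2) ∂μ :=
    integral_exp_pos ((by fun_prop : Continuous _).integrable_of_ae_mem_isCompact hK hμK)
  refine (hN.div hD hDpos.ne').congr_deriv ?_
  field_simp
  ring

theorem lipschitzWith_of_hasDerivAt_abs_le {f f' : ℝ → ℝ} {C : ℝ}
    (hf : ∀ z, HasDerivAt f (f' z) z) (hf' : ∀ z, |f' z| ≤ C) : LipschitzWith C.toNNReal f := by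
  refine lipschitzWith_of_nnnorm_deriv_le (fun z => (hf z).differentiableAt) fun z => ?_
  rw [(hf z).deriv, ← NNReal.coe_le_coe, coe_nnnorm, Real.norm_eq_abs]
  exact (hf' z).trans (le_coe_toNNReal C)

theorem stmt_10_general (P₀ : Measure ℝ) [IsProbabilityMeasure P₀] (L s : ℝ)
    (hs : 0 < s)
    (hsupp : ∀ᵐ x ∂P₀, x ∈ Set.Icc (-L) L)
    (η m1 m2 Var : ℝ → ℝ)
    (hη : ∀ z, η z = (∫ x, x * Real.exp (-s * (z - x) ^ 2 / 2) ∂P₀) /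
      (∫ x, Real.exp (-s * (z - x) ^ 2 / 2) ∂P₀))
    (hm1 : ∀ z, m1 z = (∫ x, x * Real.exp (-s * (z - x) ^ 2 / 2) ∂P₀) /
      (∫ x, Real.exp (-s * (z - x) ^ 2 / 2) ∂P₀))
    (hm2 : ∀ z, m2 z = (∫ x, x ^ 2 * Real.exp (-s * (z - x) ^ 2 / 2) ∂P₀) /
      (∫ x, Real.exp (-s * (z - x) ^ 2 / 2) ∂P₀))
    (hVar : ∀ z, Var z = m2 z - (m1 z) ^ 2) :
    (∀ z, HasDerivAt η (s * Var z) z) ∧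
    (∀ z, 0 ≤ s * Var z ∧ s * Var z ≤ s * L ^ 2) ∧
    LipschitzWith (s * L ^ 2).toNNReal η := by
  have hderiv (z : ℝ) : HasDerivAt η (s * Var z) z := by
    rw [funext hη, hVar, hm1, hm2]
    exact hasDerivAt_div_integral_exp_neg_mul_sq_sub_div_two s isCompact_Icc hsupp z
  have hVar_mem (z : ℝ) : Var z ∈ Set.Icc 0 (L ^ 2) := by
    let f x := -s * (z - x) ^ 2 / 2
    have := isProbabilityMeasure_tilted (μ := P₀) (f := f)
      ((by fun_prop : Continuous _).integrable_of_ae_mem_isCompact isCompact_Icc hsupp)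
    rw [hVar, hm1, hm2, ← integral_tilted_eq_div f, ← integral_tilted_eq_div f]
    exact integral_sq_sub_sq_integral_mem_Icc (tilted_absolutelyContinuous P₀ f hsupp)
  have hbounds (z : ℝ) : 0 ≤ s * Var z ∧ s * Var z ≤ s * L ^ 2 :=
    ⟨mul_nonneg hs.le (hVar_mem z).1, mul_le_mul_of_nonneg_left (hVar_mem z).2 hs.le⟩
  exact ⟨hderiv, hbounds, lipschitzWith_of_hasDerivAt_abs_le hderiv fun z =>
    (abs_of_nonneg (hbounds z).1).trans_le (hbounds z).2⟩

/-- The scalar MMSE denoiser for a compactly supported prior has derivative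
`s · Var(x | z)` and is `s·L²`-Lipschitz (key estimate of Lemma A.8). -/
theorem stmt_10 (P₀ : Measure ℝ) [IsProbabilityMeasure P₀] (L s : ℝ)
    (hL : 0 ≤ L) (hs : 0 < s)
    (hsupp : ∀ᵐ x ∂P₀, x ∈ Set.Icc (-L) L)
    (η m1 m2 Var : ℝ → ℝ)
    (hη : ∀ z, η z = (∫ x, x * Real.exp (-s * (z - x) ^ 2 / 2) ∂P₀) /
      (∫ x, Real.exp (-s * (z - x) ^ 2 / 2) ∂P₀))
    (hm1 : ∀ z, m1 z = (∫ x, x * Real.exp (-s * (z - x) ^ 2 / 2) ∂P₀) /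
      (∫ x, Real.exp (-s * (z - x) ^ 2 / 2) ∂P₀))
    (hm2 : ∀ z, m2 z = (∫ x, x ^ 2 * Real.exp (-s * (z - x) ^ 2 / 2) ∂P₀) /
      (∫ x, Real.exp (-s * (z - x) ^ 2 / 2) ∂P₀))
    (hVar : ∀ z, Var z = m2 z - (m1 z) ^ 2) :
    (∀ z, HasDerivAt η (s * Var z) z) ∧
    (∀ z, 0 ≤ s * Var z ∧ s * Var z ≤ s * L ^ 2) ∧
    LipschitzWith (s * L ^ 2).toNNReal η :=
  stmt_10_general P₀ L s hs hsupp η m1 m2 Var hη hm1 hm2 hVar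
end
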